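/- For any sequence (k_i)_{i∈ℤ} ⊂ ℤ ∪ {∞} for which there is an index i_0 with k_i = ∞ for all i < i_0, the 𝒪-submodule B = Σ_{i∈ℤ} 𝔭^{k_i} t^i of K((t)) is bounded for the higher topology; conversely, every bounded subset of K((t)) is contained in a submodule of this form. Hence these submodules form a basis of the Von-Neumann bornology of K((t)). -/

import Mathlib

/-!
Common setting: `K` is a characteristic-zero local field (a finite extension of `ℚ_p`)
with ring of integers `𝒪 = {c : K | ‖c‖ ≤ 1}`, maximal ideal `𝔭 = {c : K | ‖c‖ < 1}`,
residue field of cardinality `q` and the absolute value normalised by `‖π‖ = q⁻¹`.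
We formalise the two-dimensional local fields `K((t))` (as `LaurentSeries K`) and
`K{{t}}` (as the submodule `mixedCarrier K` of `ℤ → K`), their higher topologies, and
the relevant functional-analytic notions (lattices, seminorms, boundedness,
c-compactness, compactoidness, completeness for nets, duality).
-/

open Filter Topology Set Pointwise
open scoped Classical

noncomputable section

namespace TwoDimLF

variable (K : Type) [NontriviallyNormedField K]

/-- `K` is a characteristic-zero nonarchimedean local field: the norm is nonarchimedean,
takes the values `q^ℤ` on `K˟` (with a uniformizer of norm `q⁻¹`), `K` is complete, locally
compact, of characteristic zero, and the residue field has exactly `q` elements. -/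
structure IsCharZeroLocalField (q : ℕ) : Prop where
  nonarch : ∀ x y : K, ‖x + y‖ ≤ max ‖x‖ ‖y‖
  one_lt_q : 1 < q
  norm_values : ∀ x : K, x ≠ 0 → ∃ n : ℤ, ‖x‖ = (q : ℝ) ^ (-n)
  exists_uniformizer : ∃ π : K, ‖π‖ = ((q : ℝ))⁻¹
  charZero : CharZero K
  locallyCompact : LocallyCompactSpace K
  complete : CompleteSpace K
  residue_card : ∃ s : Finset K, s.card = q ∧
    ∀ x : K, ‖x‖ ≤ 1 → ∃! y, y ∈ s ∧ ‖x - y‖ < 1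

/-- The fractional ideal `𝔭^n ⊆ K` for `n ∈ ℤ ∪ {-∞}`, with the convention `𝔭^(-∞) = K`. -/
def pB (q : ℕ) (n : WithBot ℤ) : Set K :=
  WithBot.recBotCoe Set.univ (fun m : ℤ => {x : K | ‖x‖ ≤ (q : ℝ) ^ (-m)}) n

/-- The fractional ideal `𝔭^n ⊆ K` for `n ∈ ℤ ∪ {∞}`, with the convention `𝔭^∞ = {0}`. -/
def pT (q : ℕ) (n : WithTop ℤ) : Set K :=
  WithTop.recTopCoe {0} (fun m : ℤ => {x : K | ‖x‖ ≤ (q : ℝ) ^ (-m)}) n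

/-- The fractional ideal `𝔭^n ⊆ K` for `n ∈ ℤ ∪ {±∞}`. -/
def pE (q : ℕ) (n : WithBot (WithTop ℤ)) : Set K :=
  WithBot.recBotCoe Set.univ (fun m : WithTop ℤ => pT K q m) n

/-- `q ^ n ∈ ℝ` for `n ∈ ℤ ∪ {-∞}`, with the convention `q^(-∞) = 0`. -/
def qpow (q : ℕ) (n : WithBot ℤ) : ℝ :=
  WithBot.recBotCoe 0 (fun m : ℤ => (q : ℝ) ^ m) n

/-- `1 - k` for `k ∈ ℤ ∪ {±∞}` (so `1 - (±∞) = ∓∞`). -/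
def oneSubE : WithBot (WithTop ℤ) → WithBot (WithTop ℤ) :=
  WithBot.recBotCoe ((⊤ : WithTop ℤ) : WithBot (WithTop ℤ))
    (WithTop.recTopCoe (⊥ : WithBot (WithTop ℤ))
      (fun z : ℤ => (((1 - z : ℤ) : WithTop ℤ) : WithBot (WithTop ℤ))))

section LCS

variable {V : Type} [AddCommGroup V] [Module K V]

/-- `S` is an `𝒪`-submodule of the `K`-vector space `V`, where `𝒪 = {c : K | ‖c‖ ≤ 1}`
is the ring of integers of `K`. -/
def IsOSubmodule (S : Set V) : Prop :=
  (0 : V) ∈ S ∧ (∀ x ∈ S, ∀ y ∈ S, x + y ∈ S) ∧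
    ∀ c : K, ‖c‖ ≤ 1 → ∀ x ∈ S, c • x ∈ S

/-- `S` is an `𝒪`-lattice in `V`: an `𝒪`-submodule such that every vector is carried
into `S` by some nonzero scalar. -/
def IsLatticeSet (S : Set V) : Prop :=
  IsOSubmodule K S ∧ ∀ v : V, ∃ a : K, a ≠ 0 ∧ a • v ∈ S

/-- A (nonarchimedean) seminorm on the `K`-vector space `V`. -/
def IsSeminorm (N : V → ℝ) : Prop :=
  (∀ (c : K) (v : V), N (c • v) = ‖c‖ * N v) ∧ ∀ v w : V, N (v + w) ≤ max (N v) (N w)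

/-- The gauge seminorm of a lattice `Λ ⊆ V`: `‖v‖_Λ = inf {‖a‖ : v ∈ aΛ}`. -/
def gaugeSeminorm (Λ : Set V) (v : V) : ℝ :=
  sInf {r : ℝ | ∃ a : K, v ∈ a • Λ ∧ r = ‖a‖}

/-- The group topology on `W` determined by a family `B` of neighbourhoods of zero:
neighbourhoods of `x` are generated by the translates `x + U`, `U ∈ B`. -/
def addTopologyOf {W : Type} [AddCommGroup W] (B : Set (Set W)) : TopologicalSpace W :=
  TopologicalSpace.mkOfNhds fun x => Filter.map (fun v => x + v) (⨅ U ∈ B, Filter.principal U)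

/-- `B` is (Von-Neumann) bounded for the locally convex topology `τ`: every open lattice
absorbs it. -/
def IsVNBounded (τ : TopologicalSpace V) (B : Set V) : Prop :=
  ∀ Λ : Set V, IsLatticeSet K Λ → IsOpen[τ] Λ → ∃ a : K, B ⊆ a • Λ

/-- The `𝒪`-submodule `A ⊆ V` is c-compact: for every decreasing filtered family of open
lattices `L i`, the canonical map `A → lim A/(L i ∩ A)` is surjective (phrased via
compatible families of representatives). -/
def IsCCompact (τ : TopologicalSpace V) (A : Set V) : Prop :=
  ∀ (ι : Type) (L : ι → Set V),
    (∀ i, IsLatticeSet K (L i) ∧ IsOpen[τ] (L i)) →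
    (∀ i j, ∃ k, L k ⊆ L i ∧ L k ⊆ L j) →
    ∀ x : ι → V, (∀ i, x i ∈ A) →
      (∀ i j, L j ⊆ L i → x j - x i ∈ L i) →
      ∃ a ∈ A, ∀ i, a - x i ∈ L i

/-- The `𝒪`-submodule `A ⊆ V` is compactoid: for every open lattice `Λ` there are finitely
many vectors `v₁, …, v_m ∈ V` with `A ⊆ Λ + 𝒪v₁ + ⋯ + 𝒪v_m`. -/
def IsCompactoid (τ : TopologicalSpace V) (A : Set V) : Prop :=
  ∀ Λ : Set V, IsLatticeSet K Λ → IsOpen[τ] Λ →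
    ∃ (m : ℕ) (v : Fin m → V),
      A ⊆ {u : V | ∃ l ∈ Λ, ∃ c : Fin m → K, (∀ j, ‖c j‖ ≤ 1) ∧ u = l + ∑ j, c j • v j}

/-- `A ⊆ V` is complete: every Cauchy net with values in `A` converges to a point of `A`
(for the topology `τ`). -/
def IsNetComplete (τ : TopologicalSpace V) (A : Set V) : Prop :=
  ∀ (ι : Type) [Preorder ι] [Nonempty ι],
    (∀ i j : ι, ∃ k, i ≤ k ∧ j ≤ k) →
    ∀ x : ι → V, (∀ i, x i ∈ A) →
      (∀ U ∈ @nhds V τ 0, ∃ i0, ∀ j ≥ i0, ∀ k ≥ i0, x j - x k ∈ U) →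
      ∃ a ∈ A, Filter.Tendsto x Filter.atTop (@nhds V τ a)

/-- `τ` makes `V` a locally convex topological `K`-vector space: it is a vector-space
topology whose filter of neighbourhoods of zero admits a basis of lattices. -/
def IsLCTVS (τ : TopologicalSpace V) : Prop :=
  @IsTopologicalAddGroup V τ _ ∧ @ContinuousSMul K V _ _ τ ∧
    ∀ S ∈ @nhds V τ 0, ∃ Λ : Set V, IsLatticeSet K Λ ∧ Λ ∈ @nhds V τ 0 ∧ Λ ⊆ S

/-- The topological dual of `(V, τ)`: continuous `K`-linear forms, as a set of functions. -/
def dualSet (τ : TopologicalSpace V) : Set (V → K) :=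
  {l | IsLinearMap K l ∧ @Continuous V K τ _ l}

/-- Basic neighbourhoods of zero for the `c`-topology on `V → K`: uniform convergence on
compactoid `𝒪`-submodules. -/
def cTopBasic (τ : TopologicalSpace V) : Set (Set (V → K)) :=
  {S | ∃ (B : Set V) (ε : ℝ), IsOSubmodule K B ∧ IsCompactoid K τ B ∧ 0 < ε ∧
    S = {l : V → K | ∀ x ∈ B, ‖l x‖ ≤ ε}}

/-- The `c`-topology (uniform convergence on compactoid `𝒪`-submodules) on `V → K`. -/
def cTop (τ : TopologicalSpace V) : TopologicalSpace (V → K) :=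
  addTopologyOf (cTopBasic K τ)

/-- The pseudo-polar `A^p = {l ∈ V' : |l(v)| < 1 for all v ∈ A}`. -/
def pseudoPolar (τ : TopologicalSpace V) (A : Set V) : Set (V → K) :=
  {l | l ∈ dualSet K τ ∧ ∀ v ∈ A, ‖l v‖ < 1}

/-- The pseudo-bipolar `A^{pp} = {v ∈ V : |l(v)| < 1 for all l ∈ A^p}`. -/
def pseudoBipolar (τ : TopologicalSpace V) (A : Set V) : Set V :=
  {v | ∀ l ∈ pseudoPolar K τ A, ‖l v‖ < 1}

end LCS

/-! ### The equal characteristic field `K((t))` -/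

/-- Basic neighbourhoods of zero for the higher topology on `K((t))`:
`Σ U_i t^i` where each `U_i` is an open neighbourhood of `0` in `K` and `U_i = K` for all
sufficiently large `i`. -/
def laurentBasic : Set (Set (LaurentSeries K)) :=
  {S | ∃ U : ℤ → Set K, (∀ i, IsOpen (U i) ∧ (0 : K) ∈ U i) ∧
    (∃ N : ℤ, ∀ i, N ≤ i → U i = Set.univ) ∧
    S = {f : LaurentSeries K | ∀ i, f.coeff i ∈ U i}}

/-- The higher topology on `K((t))`. -/
def laurentTop : TopologicalSpace (LaurentSeries K) := addTopologyOf (laurentBasic K)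

/-- `Λ = Σ_{i∈ℤ} 𝔭^{n_i} t^i ⊆ K((t))` for a sequence `(n_i) ⊆ ℤ ∪ {-∞}`. -/
def laurentLambda (q : ℕ) (n : ℤ → WithBot ℤ) : Set (LaurentSeries K) :=
  {f | ∀ i, f.coeff i ∈ pB K q (n i)}

/-- `B = Σ_{i∈ℤ} 𝔭^{k_i} t^i ⊆ K((t))` for a sequence `(k_i) ⊆ ℤ ∪ {∞}`. -/
def laurentPT (q : ℕ) (k : ℤ → WithTop ℤ) : Set (LaurentSeries K) :=
  {f | ∀ i, f.coeff i ∈ pT K q (k i)}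

/-- `A = Σ_{i∈ℤ} 𝔭^{k_i} t^i ⊆ K((t))` for a sequence `(k_i) ⊆ ℤ ∪ {±∞}`. -/
def laurentPE (q : ℕ) (k : ℤ → WithBot (WithTop ℤ)) : Set (LaurentSeries K) :=
  {f | ∀ i, f.coeff i ∈ pE K q (k i)}

/-- The admissible seminorm `‖Σ x_i t^i‖ = max_i ‖x_i‖ q^{n_i}` on `K((t))`. -/
def laurentSeminorm (q : ℕ) (n : ℤ → WithBot ℤ) (f : LaurentSeries K) : ℝ :=
  sSup {r : ℝ | ∃ i : ℤ, r = ‖f.coeff i‖ * qpow q (n i)}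

/-- The ring of integers `K[[t]] ⊆ K((t))`. -/
def laurentIntegers : Set (LaurentSeries K) := {f | ∀ i, i < 0 → f.coeff i = 0}

/-- The rank-two ring of integers `𝒪 + tK[[t]] ⊆ K((t))`. -/
def laurentRankTwo : Set (LaurentSeries K) :=
  {f | (∀ i, i < 0 → f.coeff i = 0) ∧ ‖f.coeff 0‖ ≤ 1}

/-- The pairing `γ(x)(y) = π₀(xy) = Σ_i x_i y_{-i}` on `K((t))`. -/
def laurentPairing (x y : LaurentSeries K) : K := ∑' i : ℤ, x.coeff i * y.coeff (-i)

/-! ### The mixed characteristic field `K{{t}}` -/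

/-- The underlying `K`-vector space of `K{{t}}`: functions `x : ℤ → K` (coefficients of
`Σ x_i t^i`) with `inf_i v_K(x_i) > -∞` (i.e. bounded norms) and `x_i → 0` as `i → -∞`. -/
def mixedCarrier : Submodule K (ℤ → K) where
  carrier := {x | (∃ C : ℝ, ∀ i, ‖x i‖ ≤ C) ∧ Filter.Tendsto x Filter.atBot (nhds (0 : K))}
  zero_mem' := ⟨⟨0, fun i => by simp⟩, tendsto_const_nhds⟩
  add_mem' := by
    rintro x y ⟨⟨C, hC⟩, hx⟩ ⟨⟨D, hD⟩, hy⟩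
    refine ⟨⟨C + D, fun i => (norm_add_le _ _).trans (add_le_add (hC i) (hD i))⟩, ?_⟩
    exact (by simpa using hx.add hy : Filter.Tendsto (fun i => x i + y i) Filter.atBot (nhds (0 : K)))
  smul_mem' := by
    rintro c x ⟨⟨C, hC⟩, hx⟩
    refine ⟨⟨‖c‖ * C, fun i => ?_⟩, ?_⟩
    · have h : ‖(c • x) i‖ = ‖c‖ * ‖x i‖ := by simp [norm_smul]
      rw [h]
      exact mul_le_mul_of_nonneg_left (hC i) (norm_nonneg c)
    · have h2 := hx.const_smul c
      rw [smul_zero] at h2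
      exact h2

/-- The field `K{{t}}`, as a `K`-vector space. -/
abbrev Mt := ↥(mixedCarrier K)

/-- Basic neighbourhoods of zero for the higher topology on `K{{t}}`:
`Σ V_i t^i` where each `V_i` is an open neighbourhood of `0` in `K`, some `𝔭^c` is
contained in every `V_i`, and for every `l` eventually `𝔭^l ⊆ V_i`. -/
def mixedBasic (q : ℕ) : Set (Set (Mt K)) :=
  {S | ∃ Vs : ℤ → Set K, (∀ i, IsOpen (Vs i) ∧ (0 : K) ∈ Vs i) ∧
    (∃ c : ℤ, ∀ i, {x : K | ‖x‖ ≤ (q : ℝ) ^ (-c)} ⊆ Vs i) ∧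
    (∀ l : ℤ, ∃ i0 : ℤ, ∀ i, i0 ≤ i → {x : K | ‖x‖ ≤ (q : ℝ) ^ (-l)} ⊆ Vs i) ∧
    S = {f : Mt K | ∀ i, f.1 i ∈ Vs i}}

/-- The higher topology on `K{{t}}`. -/
def mixedTop (q : ℕ) : TopologicalSpace (Mt K) := addTopologyOf (mixedBasic K q)

/-- `Λ = Σ_{i∈ℤ} 𝔭^{n_i} t^i ⊆ K{{t}}` for a sequence `(n_i) ⊆ ℤ ∪ {-∞}`. -/
def mixedLambda (q : ℕ) (n : ℤ → WithBot ℤ) : Set (Mt K) :=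
  {f | ∀ i, f.1 i ∈ pB K q (n i)}

/-- `B = Σ_{i∈ℤ} 𝔭^{k_i} t^i ⊆ K{{t}}` for a sequence `(k_i) ⊆ ℤ ∪ {∞}`. -/
def mixedPT (q : ℕ) (k : ℤ → WithTop ℤ) : Set (Mt K) :=
  {f | ∀ i, f.1 i ∈ pT K q (k i)}

/-- `A = Σ_{i∈ℤ} 𝔭^{k_i} t^i ⊆ K{{t}}` for a sequence `(k_i) ⊆ ℤ ∪ {±∞}`. -/
def mixedPE (q : ℕ) (k : ℤ → WithBot (WithTop ℤ)) : Set (Mt K) :=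
  {f | ∀ i, f.1 i ∈ pE K q (k i)}

/-- The admissible seminorm `‖Σ x_i t^i‖ = sup_i ‖x_i‖ q^{n_i}` on `K{{t}}`. -/
def mixedSeminorm (q : ℕ) (n : ℤ → WithBot ℤ) (f : Mt K) : ℝ :=
  sSup {r : ℝ | ∃ i : ℤ, r = ‖f.1 i‖ * qpow q (n i)}

/-- The ring of integers `𝒪{{t}} ⊆ K{{t}}`. -/
def mixedIntegers : Set (Mt K) := {f | ∀ i, ‖f.1 i‖ ≤ 1}

/-- The rank-two ring of integers `Σ_{i<0} 𝔭 t^i + Σ_{i≥0} 𝒪 t^i ⊆ K{{t}}`. -/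
def mixedRankTwo (q : ℕ) : Set (Mt K) :=
  {f | (∀ i : ℤ, i < 0 → ‖f.1 i‖ ≤ ((q : ℝ))⁻¹) ∧ ∀ i : ℤ, 0 ≤ i → ‖f.1 i‖ ≤ 1}

/-- The monomial `t^i ∈ K{{t}}`. -/
def mixedT (i : ℤ) : Mt K :=
  ⟨fun j => if j = i then 1 else 0,
    ⟨⟨1, fun j => by by_cases h : j = i <;> simp [h]⟩, by
      refine (tendsto_const_nhds : Filter.Tendsto (fun _ : ℤ => (0 : K))
        Filter.atBot (nhds 0)).congr' ?_
      filter_upwards [Filter.eventually_le_atBot (i - 1)] with j hj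
      have h : j ≠ i := by omega
      simp [h]⟩⟩

/-- Coefficients of the product of two elements of `K{{t}}` (Cauchy product). -/
def mixedMulCoeff (x y : Mt K) : ℤ → K := fun k => ∑' i : ℤ, x.1 i * y.1 (k - i)

/-- Multiplication on `K{{t}}`. -/
def mixedMul (x y : Mt K) : Mt K :=
  if h : mixedMulCoeff K x y ∈ mixedCarrier K then ⟨_, h⟩ else 0

/-- The pairing `γ(x)(y) = π₀(xy) = Σ_i x_i y_{-i}` on `K{{t}}`. -/
def mixedPairing (x y : Mt K) : K := ∑' i : ℤ, x.1 i * y.1 (-i)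

/-!
A basic neighbourhood `Σ U_i t^i` of the higher topology constrains only finitely many
coefficients of an element of `Σ 𝔭^{k_i} t^i` (those with `i0 ≤ i < N`), and each of them ranges
over a bounded subset of `K`, so a single power of a small scalar carries the whole submodule into
the neighbourhood. Conversely, the sets `Σ 𝔭^{n_i} t^i` with `n_i = -∞` for large `i` are open
lattices: one constraining a single coefficient bounds that coefficient on a bounded set, and one
whose constraints tighten like `q^i` as `i → -∞` bounds its support from below.
-/

section HigherTopology

variable {K} {q : ℕ}

theorem mem_pT_top {x : K} : x ∈ pT K q ⊤ ↔ x = 0 := Iff.rfl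

theorem pT_coe (m : ℤ) : pT K q m = Metric.closedBall 0 ((q : ℝ) ^ (-m)) := by
  ext; simp [pT]

theorem pB_coe (m : ℤ) : pB K q m = Metric.closedBall 0 ((q : ℝ) ^ (-m)) := by
  ext; simp [pB]

theorem isBounded_pT (n : WithTop ℤ) : Bornology.IsBounded (pT K q n) := by
  cases n with
  | top => exact Bornology.isBounded_singleton
  | coe m => rw [pT_coe]; exact Metric.isBounded_closedBall

theorem zero_mem_pB (n : WithBot ℤ) : (0 : K) ∈ pB K q n := by
  cases n with
  | bot => trivial
  | coe m => rw [pB_coe]; exact Metric.mem_closedBall_self (by positivity)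

theorem add_mem_pB [IsUltrametricDist K] {n : WithBot ℤ} {x y : K} (hx : x ∈ pB K q n)
    (hy : y ∈ pB K q n) : x + y ∈ pB K q n := by
  cases n with
  | bot => trivial
  | coe m =>
    rw [pB_coe, mem_closedBall_zero_iff] at *
    exact (IsUltrametricDist.norm_add_le_max x y).trans (max_le hx hy)

theorem mul_mem_pB {n : WithBot ℤ} {c x : K} (hc : ‖c‖ ≤ 1) (hx : x ∈ pB K q n) :
    c * x ∈ pB K q n := by
  cases n with
  | bot => trivial
  | coe m =>
    rw [pB_coe, mem_closedBall_zero_iff] at *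
    rw [norm_mul]
    exact (mul_le_of_le_one_left (norm_nonneg x) hc).trans hx

theorem isOpen_pB [IsUltrametricDist K] (hq : q ≠ 0) (n : WithBot ℤ) : IsOpen (pB K q n) := by
  cases n with
  | bot => exact isOpen_univ
  | coe m =>
    rw [pB_coe]
    exact IsUltrametricDist.isOpen_closedBall 0 (zpow_ne_zero _ (Nat.cast_ne_zero.2 hq))

theorem exists_le_zpow_neg (hq : 1 < q) (x : ℝ) : ∃ c : ℤ, x ≤ (q : ℝ) ^ (-c) := by
  obtain ⟨n, hn⟩ := pow_unbounded_of_one_lt x (Nat.one_lt_cast.2 hq)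
  exact ⟨-n, by simpa using hn.le⟩

theorem exists_zpow_neg_le (hq : 1 < q) {x : ℝ} (hx : 0 < x) : ∃ c : ℤ, (q : ℝ) ^ (-c) ≤ x := by
  obtain ⟨n, hn, -⟩ := exists_mem_Ioc_zpow hx (Nat.one_lt_cast.2 hq)
  exact ⟨-n, by simpa using hn.le⟩

theorem eventually_forall_pow_mul_mem {π : K} (hπ : ‖π‖ < 1) {S U : Set K}
    (hS : Bornology.IsBounded S) (hU : U ∈ 𝓝 0) :
    ∀ᶠ M : ℕ in atTop, ∀ x ∈ S, π ^ M * x ∈ U := by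
  obtain ⟨R, hR⟩ := hS.exists_norm_le
  obtain ⟨ε, hε, hεU⟩ := Metric.mem_nhds_iff.1 hU
  have hlim : Tendsto (fun M : ℕ => ‖π‖ ^ M * R) atTop (𝓝 0) := by
    simpa using (tendsto_pow_atTop_nhds_zero_of_lt_one (norm_nonneg π) hπ).mul_const R
  filter_upwards [hlim.eventually (gt_mem_nhds hε)] with M hM x hx
  refine hεU (mem_ball_zero_iff.2 ?_)
  calc ‖π ^ M * x‖ = ‖π‖ ^ M * ‖x‖ := by rw [norm_mul, norm_pow]
    _ ≤ ‖π‖ ^ M * R := by gcongr; exact hR x hx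
    _ < ε := hM


theorem isOpen_addTopologyOf {W : Type} [AddCommGroup W] {B : Set (Set W)} {U : Set W}
    (hU : U ∈ B) (hadd : ∀ x ∈ U, ∀ y ∈ U, x + y ∈ U) : IsOpen[addTopologyOf B] U :=
  fun x hx => mem_map.2 <| mem_iInf_of_mem U <| mem_iInf_of_mem hU <| mem_principal.2 fun y hy => hadd x hx y hy

theorem exists_subset_of_isOpen_addTopologyOf {W : Type} [AddCommGroup W] {B : Set (Set W)}
    (hB : ∀ U ∈ B, ∀ V ∈ B, ∃ T ∈ B, T ⊆ U ∧ T ⊆ V) (hne : B.Nonempty) {s : Set W}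
    (hs : IsOpen[addTopologyOf B] s) (h0 : (0 : W) ∈ s) : ∃ U ∈ B, U ⊆ s := by
  have h : s ∈ ⨅ U ∈ B, 𝓟 U := by simpa using hs 0 h0
  exact (hasBasis_biInf_principal' (s := id) hB hne).mem_iff.1 h

theorem laurentBasic_inter {U V : Set (LaurentSeries K)} (hU : U ∈ laurentBasic K)
    (hV : V ∈ laurentBasic K) : U ∩ V ∈ laurentBasic K := by
  obtain ⟨Us, hUs, ⟨NU, hNU⟩, rfl⟩ := hU
  obtain ⟨Vs, hVs, ⟨NV, hNV⟩, rfl⟩ := hV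
  refine ⟨fun i => Us i ∩ Vs i, fun i => ⟨(hUs i).1.inter (hVs i).1, (hUs i).2, (hVs i).2⟩,
    ⟨max NU NV, fun i hi => ?_⟩, ?_⟩
  · show Us i ∩ Vs i = univ
    rw [hNU i (le_of_max_le_left hi), hNV i (le_of_max_le_right hi), inter_self]
  · ext f
    simp only [mem_inter_iff, mem_ofPred_eq, forall_and]

theorem univ_mem_laurentBasic : (univ : Set (LaurentSeries K)) ∈ laurentBasic K :=
  ⟨fun _ => univ, fun _ => ⟨isOpen_univ, trivial⟩, ⟨0, fun _ _ => rfl⟩, by simp⟩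

theorem exists_laurentBasic_subset {s : Set (LaurentSeries K)} (hs : IsOpen[laurentTop K] s)
    (h0 : 0 ∈ s) : ∃ U ∈ laurentBasic K, U ⊆ s :=
  exists_subset_of_isOpen_addTopologyOf
    (fun U hU V hV => ⟨U ∩ V, laurentBasic_inter hU hV, inter_subset_left, inter_subset_right⟩)
    ⟨univ, univ_mem_laurentBasic⟩ hs h0

theorem eventually_pow_smul_laurentPT_subset {π : K} (hπ : ‖π‖ < 1) {k : ℤ → WithTop ℤ}
    (hk : ∃ i0, ∀ i < i0, k i = ⊤) {V : Set (LaurentSeries K)} (hV : V ∈ laurentBasic K) :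
    ∀ᶠ M : ℕ in atTop, π ^ M • laurentPT K q k ⊆ V := by
  obtain ⟨i0, hk⟩ := hk
  obtain ⟨U, hU, ⟨N, hN⟩, rfl⟩ := hV
  have hcoeff i := eventually_forall_pow_mul_mem hπ (isBounded_pT (q := q) (k i))
    ((hU i).1.mem_nhds (hU i).2)
  filter_upwards [(Finset.Ico i0 N).eventually_all.2 fun i _ => hcoeff i]
    with M hM
  rintro _ ⟨f, hf, rfl⟩ i
  rw [HahnSeries.coeff_smul, smul_eq_mul]
  by_cases hi0 : i < i0
  · have hfi : f.coeff i = 0 := by simpa [hk i hi0, mem_pT_top] using hf i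
    simpa [hfi] using (hU i).2
  by_cases hiN : N ≤ i
  · simp [hN i hiN]
  exact hM i (Finset.mem_Ico.2 ⟨not_lt.1 hi0, not_le.1 hiN⟩) _ (hf i)

theorem isVNBounded_laurentPT {k : ℤ → WithTop ℤ} (hk : ∃ i0, ∀ i < i0, k i = ⊤) :
    IsVNBounded K (laurentTop K) (laurentPT K q k) := by
  intro Λ hΛ hΛopen
  obtain ⟨V, hV, hVΛ⟩ := exists_laurentBasic_subset hΛopen hΛ.1.1
  obtain ⟨π, hπ0, hπ1⟩ := NormedField.exists_norm_lt_one K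
  obtain ⟨M, hM⟩ := (eventually_pow_smul_laurentPT_subset hπ1 hk hV).exists
  have hπM : π ^ M ≠ 0 := pow_ne_zero M (norm_pos_iff.1 hπ0)
  refine ⟨(π ^ M)⁻¹, ?_⟩
  rw [Set.subset_smul_set_iff₀ (inv_ne_zero hπM), inv_inv]
  exact hM.trans hVΛ


theorem exists_mem_laurentPT (hq : 1 < q) (f : LaurentSeries K) :
    ∃ k : ℤ → WithTop ℤ, (∃ i0, ∀ i < i0, k i = ⊤) ∧ f ∈ laurentPT K q k := by
  choose c hc using fun i => exists_le_zpow_neg hq ‖f.coeff i‖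
  refine ⟨fun i => if f.coeff i = 0 then ⊤ else c i,
    ⟨f.order, fun i hi => if_pos (HahnSeries.coeff_eq_zero_of_lt_order hi)⟩, fun i => ?_⟩
  dsimp only
  split_ifs with hfi
  · exact hfi
  · rw [pT_coe, mem_closedBall_zero_iff]
    exact hc i

section Ultrametric

variable [IsUltrametricDist K]

theorem laurentLambda_mem_laurentBasic (hq : q ≠ 0) {n : ℤ → WithBot ℤ}
    (hn : ∃ N, ∀ i, N ≤ i → n i = ⊥) : laurentLambda K q n ∈ laurentBasic K := by
  obtain ⟨N, hN⟩ := hn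
  exact ⟨fun i => pB K q (n i), fun i => ⟨isOpen_pB hq (n i), zero_mem_pB (n i)⟩,
    ⟨N, fun i hi => by dsimp only; rw [hN i hi]; rfl⟩, rfl⟩

theorem add_mem_laurentLambda {n : ℤ → WithBot ℤ} {f g : LaurentSeries K}
    (hf : f ∈ laurentLambda K q n) (hg : g ∈ laurentLambda K q n) :
    f + g ∈ laurentLambda K q n :=
  fun i => by simpa only [HahnSeries.coeff_add] using add_mem_pB (hf i) (hg i)

theorem isOpen_laurentLambda (hq : q ≠ 0) {n : ℤ → WithBot ℤ}
    (hn : ∃ N, ∀ i, N ≤ i → n i = ⊥) : IsOpen[laurentTop K] (laurentLambda K q n) :=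
  isOpen_addTopologyOf (laurentLambda_mem_laurentBasic hq hn) fun _ hf _ hg =>
    add_mem_laurentLambda hf hg

theorem isLatticeSet_laurentLambda (hq : 1 < q) {n : ℤ → WithBot ℤ}
    (hn : ∃ N, ∀ i, N ≤ i → n i = ⊥) : IsLatticeSet K (laurentLambda K q n) := by
  refine ⟨⟨fun i => zero_mem_pB (n i), fun _ hf _ hg => add_mem_laurentLambda hf hg,
    fun c hc f hf i => by simpa only [HahnSeries.coeff_smul, smul_eq_mul] using mul_mem_pB hc (hf i)⟩,
    fun f => ?_⟩
  obtain ⟨k, hk, hf⟩ := exists_mem_laurentPT hq f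
  obtain ⟨π, hπ0, hπ1⟩ := NormedField.exists_norm_lt_one K
  obtain ⟨M, hM⟩ := (eventually_pow_smul_laurentPT_subset hπ1 hk
    (laurentLambda_mem_laurentBasic (by positivity) hn)).exists
  exact ⟨π ^ M, pow_ne_zero M (norm_pos_iff.1 hπ0), hM (smul_mem_smul_set hf)⟩

theorem IsVNBounded.exists_norm_coeff_le (hq : 1 < q) {B : Set (LaurentSeries K)}
    (hB : IsVNBounded K (laurentTop K) B) {n : ℤ → WithBot ℤ}
    (hn : ∃ N, ∀ i, N ≤ i → n i = ⊥) :
    ∃ C : ℝ, ∀ f ∈ B, ∀ i (m : ℤ), n i = m → ‖f.coeff i‖ ≤ C * (q : ℝ) ^ (-m) := by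
  obtain ⟨a, ha⟩ := hB _ (isLatticeSet_laurentLambda hq hn)
    (isOpen_laurentLambda (by positivity) hn)
  refine ⟨‖a‖, fun f hf i m hm => ?_⟩
  obtain ⟨g, hg, rfl⟩ := ha hf
  have hgi := hg i
  rw [hm, pB_coe, mem_closedBall_zero_iff] at hgi
  rw [HahnSeries.coeff_smul, norm_smul]
  gcongr

theorem IsVNBounded.exists_forall_norm_coeff_le (hq : 1 < q) {B : Set (LaurentSeries K)}
    (hB : IsVNBounded K (laurentTop K) B) (i : ℤ) :
    ∃ c : ℤ, ∀ f ∈ B, ‖f.coeff i‖ ≤ (q : ℝ) ^ (-c) := by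
  obtain ⟨C, hC⟩ := hB.exists_norm_coeff_le hq
    (n := fun j => if j = i then ((0 : ℤ) : WithBot ℤ) else ⊥)
    ⟨i + 1, fun j hj => if_neg (by omega)⟩
  obtain ⟨c, hc⟩ := exists_le_zpow_neg hq C
  refine ⟨c, fun f hf => le_trans ?_ hc⟩
  simpa using hC f hf i 0 (if_pos rfl)

/-- The lattice tested here asks the `i`-th coefficient (`i < 0`) to be `q^i` times smaller than
that of some element of `B` with nonzero `i`-th coefficient; absorbing `B` then forces
`q^(-i) ≤ C` for arbitrarily negative `i`. -/
theorem IsVNBounded.exists_forall_coeff_eq_zero (hq : 1 < q) {B : Set (LaurentSeries K)}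
    (hB : IsVNBounded K (laurentTop K) B) : ∃ i0 : ℤ, ∀ i < i0, ∀ f ∈ B, f.coeff i = 0 := by
  by_contra! h
  have hwit (i : ℤ) : ∃ c : ℤ, (∃ f ∈ B, f.coeff i ≠ 0) →
      ∃ f ∈ B, (q : ℝ) ^ (-c) ≤ ‖f.coeff i‖ := by
    by_cases hex : ∃ f ∈ B, f.coeff i ≠ 0
    · obtain ⟨f, hf, hfi⟩ := hex
      obtain ⟨c, hc⟩ := exists_zpow_neg_le hq (norm_pos_iff.2 hfi)
      exact ⟨c, fun _ => ⟨f, hf, hc⟩⟩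
    · exact ⟨0, fun h => absurd h hex⟩
  choose c hc using hwit
  obtain ⟨C, hC⟩ := hB.exists_norm_coeff_le hq
    (n := fun i => if i < 0 then ((c i - i : ℤ) : WithBot ℤ) else ⊥)
    ⟨0, fun i hi => if_neg (by omega)⟩
  have hq1 : (1 : ℝ) < q := Nat.one_lt_cast.2 hq
  obtain ⟨m, hm⟩ := pow_unbounded_of_one_lt C hq1
  obtain ⟨i, hi, hex⟩ := h (min 0 (-m))
  obtain ⟨f, hf, hfi⟩ := hc i hex
  have hi0 : i < 0 := hi.trans_le (min_le_left _ _)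
  have hupper := hC f hf i (c i - i) (if_pos hi0)
  have hlower : (q : ℝ) ^ (-c i) * (q : ℝ) ^ (-i) ≤ (q : ℝ) ^ (-c i) * C := by
    calc (q : ℝ) ^ (-c i) * (q : ℝ) ^ (-i) ≤ ‖f.coeff i‖ * (q : ℝ) ^ (-i) := by gcongr
      _ ≤ C * (q : ℝ) ^ (-(c i - i)) * (q : ℝ) ^ (-i) := by gcongr
      _ = (q : ℝ) ^ (-c i) * C := by
        rw [mul_assoc, ← zpow_add₀ (by positivity)]; ring_nf
  have hmi : (q : ℝ) ^ (m : ℤ) ≤ (q : ℝ) ^ (-i) :=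
    zpow_le_zpow_right₀ hq1.le (by have := hi.trans_le (min_le_right _ _); omega)
  have := le_of_mul_le_mul_left hlower (by positivity)
  rw [zpow_natCast] at hmi
  linarith

end Ultrametric

end HigherTopology

/-- For any sequence `(k_i) ⊆ ℤ ∪ {∞}` with `k_i = ∞` for all `i` below some
index `i0`, the `𝒪`-submodule `B = Σ_{i∈ℤ} 𝔭^{k_i} t^i ⊆ K((t))` is bounded for the higher
topology; conversely every bounded subset of `K((t))` is contained in a submodule of this
form. Hence these submodules form a basis of the Von-Neumann bornology of `K((t))`. -/
theorem statement7 (q : ℕ) (hK : IsCharZeroLocalField K q) :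
    (∀ k : ℤ → WithTop ℤ, (∃ i0 : ℤ, ∀ i : ℤ, i < i0 → k i = ⊤) →
      IsVNBounded K (laurentTop K) (laurentPT K q k)) ∧
    (∀ B : Set (LaurentSeries K), IsVNBounded K (laurentTop K) B →
      ∃ k : ℤ → WithTop ℤ, (∃ i0 : ℤ, ∀ i : ℤ, i < i0 → k i = ⊤) ∧
        B ⊆ laurentPT K q k) := by
  have : IsUltrametricDist K := .isUltrametricDist_of_forall_norm_add_le_max_norm hK.nonarch
  refine ⟨fun k hk => isVNBounded_laurentPT hk, fun B hB => ?_⟩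
  obtain ⟨i0, hi0⟩ := hB.exists_forall_coeff_eq_zero hK.one_lt_q
  choose c hc using hB.exists_forall_norm_coeff_le hK.one_lt_q
  refine ⟨fun i => if i < i0 then ⊤ else c i, ⟨i0, fun i hi => if_pos hi⟩, fun f hf i => ?_⟩
  dsimp only
  split_ifs with hi
  · exact hi0 i hi f hf
  · rw [pT_coe, mem_closedBall_zero_iff]
    exact hc i f hf

end TwoDimLF
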